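/- Let d ≥ 3 and let z_1, …, z_d ∈ ℤ^d be a basis of ℤ^d such that z̲_1, …, z̲_{d−1} are linearly independent and z̲_2, …, z̲_d are linearly independent in ℝ^{d−1}. Suppose |z̲_3| ≥ |z̲_1| and det Λ̲_{2,d−1} > 3 |z̲_2| · det Λ̲_{2,d−2} (where for d = 3 one reads det Λ̲_{2,1} = |z̲_2|). Then 𝔖_2 is contained in the interior of 𝔖_1, i.e. |x − α_1| < R_1 for every x ∈ π_d with |x − α_2| ≤ R_2, and moreover R_2 < R_1/3. -/

import Mathlib

open scoped InnerProductSpace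

noncomputable section

/-- `ℝ^n` with the Euclidean structure. -/
abbrev E (n : ℕ) : Type := EuclideanSpace ℝ (Fin n)

/-- The projection `x ↦ x̲` forgetting the last coordinate. -/
def pr (d : ℕ) (x : E d) : E (d - 1) :=
  WithLp.toLp 2 (fun i : Fin (d - 1) => x (Fin.castLE (Nat.sub_le d 1) i))

/-- The canonical embedding of `ℤ^d` into `ℝ^d`. -/
def toE (d : ℕ) (z : Fin d → ℤ) : E d := WithLp.toLp 2 (fun i => (z i : ℝ))

/-- The `m`-dimensional volume of the parallelepiped spanned by `v 0, …, v (m-1)`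
(square root of the Gram determinant). -/
def gramVol {n m : ℕ} (v : Fin m → E n) : ℝ :=
  Real.sqrt ((Matrix.of (fun i j : Fin m => ⟪v i, v j⟫_ℝ)).det)

/-- `z` is a best approximation vector for the linear form `L_α : x ↦ ⟪α, x⟫`. -/
def IsBestApprox (d : ℕ) (α : E d) (z : Fin d → ℤ) : Prop :=
  pr d (toE d z) ≠ 0 ∧
  ∀ z' : Fin d → ℤ, pr d (toE d z') ≠ 0 →
    (‖pr d (toE d z')‖ ≤ ‖pr d (toE d z)‖ → |⟪α, toE d z⟫_ℝ| ≤ |⟪α, toE d z'⟫_ℝ|) ∧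
    (‖pr d (toE d z')‖ < ‖pr d (toE d z)‖ → |⟪α, toE d z⟫_ℝ| < |⟪α, toE d z'⟫_ℝ|)

/-- `det Λ̲_{k,l}` for a sequence of integer vectors: the `l`-dimensional volume of the
parallelepiped spanned by `z̲_k, …, z̲_{k+l-1}`. -/
def detL (d : ℕ) (z : ℕ → Fin d → ℤ) (k l : ℕ) : ℝ :=
  gramVol (fun i : Fin l => pr d (toE d (z (k + i.1))))

/-- `D_{k,l} = det Λ̲_{k,l} / |z̲_k|^l`. -/
def Dq (d : ℕ) (z : ℕ → Fin d → ℤ) (k l : ℕ) : ℝ :=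
  detL d z k l / ‖pr d (toE d (z k))‖ ^ l

/-- `B_k = |z̲_{k+1}| / |z̲_k|`. -/
def Bq (d : ℕ) (z : ℕ → Fin d → ℤ) (k : ℕ) : ℝ :=
  ‖pr d (toE d (z (k + 1)))‖ / ‖pr d (toE d (z k))‖

/-- `R_k = 1 / (2 |z̲_{k+1}| det Λ̲_{k,d-1})`. -/
def Rq (d : ℕ) (z : ℕ → Fin d → ℤ) (k : ℕ) : ℝ :=
  1 / (2 * ‖pr d (toE d (z (k + 1)))‖ * detL d z k (d - 1))

/-- `v 0, …, v (d-1)` form a basis of the lattice `ℤ^d`. -/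
def IsZBasis (d : ℕ) (v : Fin d → Fin d → ℤ) : Prop :=
  IsUnit ((Matrix.of (fun i j : Fin d => v j i)).det)

/-! Put `w = α₁ - α₂`; it is horizontal because `α₁, α₂ ∈ π_d`. Write `z̲₁ = b + p` with `p` in the
span `V` of `z̲₂, …, z̲_{d-1}` and `b ⊥ V`. Then `det Λ̲_{1,d-1} = |b| · det Λ̲_{2,d-2}`, and since `w̲`
and `b` lie on the line `V^⊥`, `|w| · det Λ̲_{1,d-1} = |⟨α₂, z₁⟩| · det Λ̲_{2,d-2}`. Cramer's rule for
the unimodular matrix with rows `z₁, …, z_d` gives `|⟨α₂, z₁⟩| · det Λ̲_{2,d-1} = 1`. Hence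
`|w| = det Λ̲_{2,d-2} / (det Λ̲_{1,d-1} det Λ̲_{2,d-1}) < 2 R₁ / 3` by the determinant hypothesis,
`R₂ < R₁ / 3` follows from `|b| ≤ |z̲₁| ≤ |z̲₃|`, and the triangle inequality concludes. -/

open Submodule Set Matrix

section Gram

variable {F : Type*} [NormedAddCommGroup F] [InnerProductSpace ℝ F]

theorem det_gram_cons_add {m : ℕ} {w : Fin m → F} {b p : F}
    (hb : b ∈ (span ℝ (range w))ᗮ) (hp : p ∈ span ℝ (range w)) :
    (gram ℝ (Fin.cons (b + p) w : Fin (m + 1) → F)).det = ‖b‖ ^ 2 * (gram ℝ w).det := by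
  have hwb (i : Fin m) : ⟪b, w i⟫_ℝ = 0 :=
    inner_left_of_mem_orthogonal (subset_span (mem_range_self i)) hb
  have hbp : ⟪b, p⟫_ℝ = 0 := inner_left_of_mem_orthogonal hp hb
  -- Only the corner entry differs from the Gram matrix of the dependent family `(p, w)`.
  set G := gram ℝ (Fin.cons p w : Fin (m + 1) → F)
  have hG : G.det = 0 := by
    rw [← not_ne_iff, det_gram_ne_zero_iff_linearIndependent, linearIndependent_finCons]
    tauto
  have hrow : gram ℝ (Fin.cons (b + p) w : Fin (m + 1) → F)
      = G.updateRow 0 (G 0 + ‖b‖ ^ 2 • Pi.single 0 1) := by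
    ext i j
    cases i using Fin.cases <;> cases j using Fin.cases <;>
      simp [G, inner_add_left, inner_add_right, hwb, real_inner_comm b, norm_add_sq_real, hbp,
        add_comm]
  rw [hrow, det_updateRow_add, updateRow_eq_self, hG, det_updateRow_smul, ← adjugate_apply,
    adjugate_fin_succ_eq_det_submatrix]
  simp [G, gram, submatrix]

theorem sqrt_det_gram_cons_le {m : ℕ} (w : Fin m → F) (x : F) :
    √(gram ℝ (Fin.cons x w : Fin (m + 1) → F)).det ≤ ‖x‖ * √(gram ℝ w).det := by
  have := FiniteDimensional.span_of_finite ℝ (finite_range w)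
  obtain ⟨p, hp, b, hb, rfl⟩ := (span ℝ (range w)).exists_add_mem_mem_orthogonal x
  rw [add_comm p]
  have hbp : ‖b‖ ≤ ‖b + p‖ := by
    refine le_of_sq_le_sq ?_ (norm_nonneg _)
    rw [norm_add_sq_real, inner_left_of_mem_orthogonal hp hb]
    nlinarith [sq_nonneg ‖p‖]
  rw [det_gram_cons_add hb hp, Real.sqrt_mul (sq_nonneg _),
    Real.sqrt_sq (norm_nonneg _)]
  gcongr

theorem abs_real_inner_eq_norm_mul_norm_of_finrank_eq_one {K : Submodule ℝ F}
    (hK : Module.finrank ℝ K = 1) {x y : F} (hx : x ∈ K) (hy : y ∈ K) :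
    |⟪x, y⟫_ℝ| = ‖x‖ * ‖y‖ := by
  rcases eq_or_ne x 0 with rfl | hx0
  · simp
  obtain ⟨c, hc⟩ := (finrank_eq_one_iff_of_nonzero' (⟨x, hx⟩ : K) (by simpa using hx0)).mp hK
    ⟨y, hy⟩
  obtain rfl : c • x = y := congrArg Subtype.val hc
  rw [real_inner_smul_right, real_inner_self_eq_norm_sq, norm_smul, Real.norm_eq_abs, abs_mul,
    abs_of_nonneg (sq_nonneg ‖x‖)]
  ring

theorem finrank_orthogonal_span_eq_one {m : ℕ} (hF : Module.finrank ℝ F = m + 1)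
    {w : Fin m → F} (hw : LinearIndependent ℝ w) :
    Module.finrank ℝ (span ℝ (range w))ᗮ = 1 := by
  have := Module.finite_of_finrank_eq_succ hF
  have := (span ℝ (range w)).finrank_add_finrank_orthogonal
  rw [finrank_span_eq_card hw, Fintype.card_fin, hF] at this
  omega

theorem norm_mul_sqrt_det_gram_cons {m : ℕ} (hF : Module.finrank ℝ F = m + 1)
    {w : Fin m → F} (hw : LinearIndependent ℝ w) {u : F} (hu : u ∈ (span ℝ (range w))ᗮ)
    (x : F) :
    ‖u‖ * √(gram ℝ (Fin.cons x w : Fin (m + 1) → F)).det = |⟪u, x⟫_ℝ| * √(gram ℝ w).det := by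
  have := FiniteDimensional.span_of_finite ℝ (finite_range w)
  obtain ⟨p, hp, b, hb, rfl⟩ := (span ℝ (range w)).exists_add_mem_mem_orthogonal x
  rw [inner_add_right, inner_left_of_mem_orthogonal hp hu, zero_add, add_comm p,
    det_gram_cons_add hb hp, Real.sqrt_mul (sq_nonneg _), Real.sqrt_sq (norm_nonneg _),
    abs_real_inner_eq_norm_mul_norm_of_finrank_eq_one (finrank_orthogonal_span_eq_one hF hw) hu hb,
    mul_assoc]

end Gram

theorem Matrix.det_eq_neg_one_pow_mul_mulVec_mul_det_submatrix {R : Type*} [CommRing R] {n : ℕ}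
    (M : Matrix (Fin (n + 1)) (Fin (n + 1)) R) {v : Fin (n + 1) → R} (hv : v (Fin.last n) = 1)
    (hMv : ∀ i : Fin n, (M *ᵥ v) i.succ = 0) :
    M.det = (-1) ^ n * (M *ᵥ v) 0 * (M.submatrix Fin.succ Fin.castSucc).det := by
  -- Cramer's rule: the last entry of `adjugate M *ᵥ (M *ᵥ v) = det M • v`.
  have h := congrFun (congrArg (· *ᵥ v) M.adjugate_mul) (Fin.last n)
  simp only [← mulVec_mulVec, smul_mulVec, one_mulVec, Pi.smul_apply, hv, smul_eq_mul,
    mul_one] at h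
  rw [← h, mulVec, dotProduct, Fin.sum_univ_succ, adjugate_fin_succ_eq_det_submatrix]
  simp only [Fin.coe_ofNat_eq_mod, Nat.zero_mod, Fin.val_last, zero_add, Fin.succAbove_zero,
    Fin.succAbove_last, hMv, mul_zero, Finset.sum_const_zero, add_zero]
  ring

theorem inner_eq_inner_pr_add {n : ℕ} (x y : E (n + 1)) :
    ⟪x, y⟫_ℝ = ⟪pr (n + 1) x, pr (n + 1) y⟫_ℝ + x (Fin.last n) * y (Fin.last n) := by
  rw [PiLp.inner_apply, PiLp.inner_apply, Fin.sum_univ_castSucc]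
  simp only [RCLike.inner_apply, Real.ringHom_apply, mul_comm, pr, add_left_inj]
  rfl

theorem norm_pr_of_last_eq_zero {n : ℕ} {x : E (n + 1)} (hx : x (Fin.last n) = 0) :
    ‖pr (n + 1) x‖ = ‖x‖ := by
  rw [← sq_eq_sq₀ (norm_nonneg _) (norm_nonneg _), ← real_inner_self_eq_norm_sq,
    ← real_inner_self_eq_norm_sq, inner_eq_inner_pr_add, hx, zero_mul, add_zero]

theorem gramVol_eq_abs_det {n : ℕ} (v : Fin n → E n) :
    gramVol v = |(Matrix.of fun i j => v i j).det| := by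
  have h : gram ℝ v = (Matrix.of fun i j => v i j) * (Matrix.of fun i j => v i j)ᵀ := by
    ext i j
    simp [Matrix.mul_apply, PiLp.inner_apply, mul_comm]
  have h2 : (gram ℝ v).det = (Matrix.of fun i j => v i j).det ^ 2 := by
    rw [h, det_mul, det_transpose, sq]
  rw [gramVol, ← Real.sqrt_sq_eq_abs, ← h2]
  rfl

theorem abs_det_of_isZBasis {d : ℕ} {v : Fin d → Fin d → ℤ} (hv : IsZBasis d v) :
    |(Matrix.of fun i j => (v i j : ℝ)).det| = 1 := by
  have h : (Matrix.of fun i j => (v i j : ℝ)) = ((Matrix.of fun i j => v j i).map (↑))ᵀ := rfl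
  rw [h, det_transpose, ← Int.cast_det]
  rcases Int.isUnit_iff.mp hv with h1 | h1 <;> simp [h1]

theorem detL_succ (d : ℕ) (z : ℕ → Fin d → ℤ) (k l : ℕ) :
    detL d z k (l + 1) = √(gram ℝ (Fin.cons (pr d (toE d (z k)))
      fun i : Fin l => pr d (toE d (z (k + 1 + i))) : Fin (l + 1) → E (d - 1))).det := by
  show √(gram ℝ _).det = _
  congr 3
  ext i : 1
  cases i using Fin.cases <;> simp [add_assoc, add_comm 1]

theorem detL_pos {d : ℕ} {z : ℕ → Fin d → ℤ} {k l : ℕ}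
    (h : LinearIndependent ℝ fun i : Fin l => pr d (toE d (z (i + k)))) : 0 < detL d z k l := by
  simp_rw [add_comm _ k] at h
  exact Real.sqrt_pos.2 (posDef_gram_of_linearIndependent h).det_pos

theorem abs_inner_mul_detL_eq_one {n : ℕ} (z : ℕ → Fin (n + 1) → ℤ)
    (hz : IsZBasis (n + 1) fun j => z (j.1 + 1)) {α : E (n + 1)} (hα : α (Fin.last n) = 1)
    (hαz : ∀ i : Fin n, ⟪α, toE (n + 1) (z (i.1 + 2))⟫_ℝ = 0) :
    |⟪α, toE (n + 1) (z 1)⟫_ℝ| * detL (n + 1) z 2 n = 1 := by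
  set M : Matrix (Fin (n + 1)) (Fin (n + 1)) ℝ := Matrix.of fun i j => (z (i.1 + 1) j : ℝ)
  have hMα (i : Fin (n + 1)) : (M *ᵥ α) i = ⟪α, toE (n + 1) (z (i.1 + 1))⟫_ℝ := by
    simp [M, mulVec, dotProduct, PiLp.inner_apply, toE]
  have hdetL : detL (n + 1) z 2 n = |(M.submatrix Fin.succ Fin.castSucc).det| := by
    rw [detL, gramVol_eq_abs_det]
    congr 3
    ext i j
    simp only [pr, toE, add_comm 2, of_apply, Fin.val_succ, Int.cast_inj, M]
    rfl
  have hM : |M.det| = 1 := abs_det_of_isZBasis hz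
  rw [M.det_eq_neg_one_pow_mul_mulVec_mul_det_submatrix hα fun i => (hMα _).trans (hαz i),
    hMα 0] at hM
  simpa [hdetL, abs_mul] using hM

theorem norm_sub_mul_detL_eq {m : ℕ} (z : ℕ → Fin (m + 2) → ℤ)
    (hz : LinearIndependent ℝ fun i : Fin m => pr (m + 2) (toE (m + 2) (z (i.1 + 2))))
    {α₁ α₂ : E (m + 2)} (hα : α₁ (Fin.last (m + 1)) = α₂ (Fin.last (m + 1)))
    (hα₁ : ∀ i : Fin (m + 1), ⟪α₁, toE (m + 2) (z (i.1 + 1))⟫_ℝ = 0)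
    (hα₂ : ∀ i : Fin m, ⟪α₂, toE (m + 2) (z (i.1 + 2))⟫_ℝ = 0) :
    ‖α₁ - α₂‖ * detL (m + 2) z 1 (m + 1)
      = |⟪α₂, toE (m + 2) (z 1)⟫_ℝ| * detL (m + 2) z 2 m := by
  have hlast : (α₁ - α₂) (Fin.last (m + 1)) = 0 := by simp [hα]
  have hinner (y : E (m + 2)) : ⟪pr (m + 2) (α₁ - α₂), pr (m + 2) y⟫_ℝ = ⟪α₁ - α₂, y⟫_ℝ := by
    rw [inner_eq_inner_pr_add (α₁ - α₂), hlast, zero_mul, add_zero]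
  have hperp : pr (m + 2) (α₁ - α₂)
      ∈ (span ℝ (range fun i : Fin m => pr (m + 2) (toE (m + 2) (z (1 + 1 + i)))))ᗮ := by
    rw [span_range_eq_iSup, ← iInf_orthogonal, mem_iInf]
    intro i
    have h₁ := hα₁ i.succ
    rw [Fin.val_succ] at h₁
    rw [mem_orthogonal_singleton_iff_inner_left, hinner, inner_sub_left,
      show 1 + 1 + i.1 = i.1 + 1 + 1 by omega, h₁, hα₂ i, sub_zero]
  have hg : LinearIndependent ℝ fun i : Fin m => pr (m + 2) (toE (m + 2) (z (1 + 1 + i))) := by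
    simpa only [add_comm 2] using hz
  have h₀ := hα₁ 0
  rw [Fin.val_zero, zero_add] at h₀
  rw [detL_succ, ← norm_pr_of_last_eq_zero hlast,
    norm_mul_sqrt_det_gram_cons finrank_euclideanSpace_fin hg hperp, hinner, inner_sub_left,
    h₀, zero_sub, abs_neg]
  rfl

theorem Rq_two_lt_Rq_one_div_three {m : ℕ} (hm : 1 ≤ m) {z : ℕ → Fin (m + 2) → ℤ}
    (hz₁ : LinearIndependent ℝ fun i : Fin (m + 1) => pr (m + 2) (toE (m + 2) (z (i.1 + 1))))
    (hz₂ : LinearIndependent ℝ fun i : Fin (m + 1) => pr (m + 2) (toE (m + 2) (z (i.1 + 2))))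
    (h13 : ‖pr (m + 2) (toE (m + 2) (z 1))‖ ≤ ‖pr (m + 2) (toE (m + 2) (z 3))‖)
    (hdet : 3 * ‖pr (m + 2) (toE (m + 2) (z 2))‖ * detL (m + 2) z 2 m
      < detL (m + 2) z 2 (m + 1)) :
    Rq (m + 2) z 2 < Rq (m + 2) z 1 / 3 := by
  set a : ℕ → E (m + 1) := fun k => pr (m + 2) (toE (m + 2) (z k))
  set P := detL (m + 2) z 1 (m + 1)
  set Q := detL (m + 2) z 2 (m + 1)
  set S := detL (m + 2) z 2 m
  have hPS : P ≤ ‖a 1‖ * S := (detL_succ _ _ _ _).trans_le (sqrt_det_gram_cons_le _ _)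
  have hP : 0 < P := detL_pos hz₁
  have hQ : 0 < Q := detL_pos hz₂
  have hS : 0 ≤ S := Real.sqrt_nonneg _
  have ha₂ : 0 < ‖a 2‖ := norm_pos_iff.2 (hz₂.ne_zero 0)
  have ha₃ : 0 < ‖a 3‖ := norm_pos_iff.2 (hz₂.ne_zero ⟨1, by omega⟩)
  change 1 / (2 * ‖a 3‖ * Q) < 1 / (2 * ‖a 2‖ * P) / 3
  rw [div_div, one_div_lt_one_div (by positivity) (by positivity)]
  calc 2 * ‖a 2‖ * P * 3 ≤ 2 * ‖a 1‖ * (3 * ‖a 2‖ * S) := by nlinarith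
    _ ≤ 2 * ‖a 3‖ * (3 * ‖a 2‖ * S) := by gcongr
    _ < 2 * ‖a 3‖ * Q := by gcongr

theorem norm_sub_lt_two_thirds_Rq {m : ℕ} {z : ℕ → Fin (m + 2) → ℤ}
    (hz : IsZBasis (m + 2) fun j => z (j.1 + 1))
    (hz₁ : LinearIndependent ℝ fun i : Fin (m + 1) => pr (m + 2) (toE (m + 2) (z (i.1 + 1))))
    (hz₂ : LinearIndependent ℝ fun i : Fin (m + 1) => pr (m + 2) (toE (m + 2) (z (i.1 + 2))))
    (hdet : 3 * ‖pr (m + 2) (toE (m + 2) (z 2))‖ * detL (m + 2) z 2 m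
      < detL (m + 2) z 2 (m + 1))
    {α₁ α₂ : E (m + 2)} (hα₁ : α₁ (Fin.last (m + 1)) = 1) (hα₂ : α₂ (Fin.last (m + 1)) = 1)
    (hα₁z : ∀ i : Fin (m + 1), ⟪α₁, toE (m + 2) (z (i.1 + 1))⟫_ℝ = 0)
    (hα₂z : ∀ i : Fin (m + 1), ⟪α₂, toE (m + 2) (z (i.1 + 2))⟫_ℝ = 0) :
    ‖α₁ - α₂‖ < 2 / 3 * Rq (m + 2) z 1 := by
  set a₂ := ‖pr (m + 2) (toE (m + 2) (z 2))‖
  set t := |⟪α₂, toE (m + 2) (z 1)⟫_ℝ|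
  set P := detL (m + 2) z 1 (m + 1)
  set Q := detL (m + 2) z 2 (m + 1)
  have htQ : t * Q = 1 := abs_inner_mul_detL_eq_one z hz hα₂ hα₂z
  have htS : ‖α₁ - α₂‖ * P = t * detL (m + 2) z 2 m :=
    norm_sub_mul_detL_eq z (hz₂.comp Fin.castSucc (Fin.castSucc_injective m))
      (hα₁.trans hα₂.symm) hα₁z fun i => hα₂z i.castSucc
  have ht : 0 < t := pos_of_mul_pos_left (htQ ▸ one_pos) (detL_pos hz₂).le
  have hP : 0 < P := detL_pos hz₁
  have ha₂ : 0 < a₂ := norm_pos_iff.2 (hz₂.ne_zero 0)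
  change ‖α₁ - α₂‖ < 2 / 3 * (1 / (2 * a₂ * P))
  rw [show 2 / 3 * (1 / (2 * a₂ * P)) = 1 / (3 * a₂ * P) by field_simp,
    lt_div_iff₀ (by positivity)]
  calc ‖α₁ - α₂‖ * (3 * a₂ * P) = t * (3 * a₂ * detL (m + 2) z 2 m) := by
        linear_combination 3 * a₂ * htS
    _ < t * Q := by gcongr
    _ = 1 := htQ

theorem stmt15 (d : ℕ) (hd : 3 ≤ d) (z : ℕ → Fin d → ℤ)
    (hbasis : IsZBasis d (fun j => z (j.1 + 1)))
    (hlip1 : LinearIndependent ℝ (fun i : Fin (d - 1) => pr d (toE d (z (i.1 + 1)))))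
    (hlip2 : LinearIndependent ℝ (fun i : Fin (d - 1) => pr d (toE d (z (i.1 + 2)))))
    (h31 : ‖pr d (toE d (z 1))‖ ≤ ‖pr d (toE d (z 3))‖)
    (hdet : 3 * ‖pr d (toE d (z 2))‖ * detL d z 2 (d - 2) < detL d z 2 (d - 1))
    (α1 : E d) (hα1pi : α1 ⟨d - 1, by omega⟩ = 1)
    (hα1perp : ∀ i : Fin (d - 1), ⟪α1, toE d (z (i.1 + 1))⟫_ℝ = 0)
    (α2 : E d) (hα2pi : α2 ⟨d - 1, by omega⟩ = 1)
    (hα2perp : ∀ i : Fin (d - 1), ⟪α2, toE d (z (i.1 + 2))⟫_ℝ = 0) :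
    (∀ x : E d, x ⟨d - 1, by omega⟩ = 1 → ‖x - α2‖ ≤ Rq d z 2 → ‖x - α1‖ < Rq d z 1) ∧
      Rq d z 2 < Rq d z 1 / 3 := by
  obtain ⟨m, rfl⟩ : ∃ m, d = m + 2 := ⟨d - 2, by omega⟩
  have hR := Rq_two_lt_Rq_one_div_three (by omega) hlip1 hlip2 h31 hdet
  have hw := norm_sub_lt_two_thirds_Rq hbasis hlip1 hlip2 hdet hα1pi hα2pi hα1perp hα2perp
  refine ⟨fun x _ hx => ?_, hR⟩
  calc ‖x - α1‖ ≤ ‖x - α2‖ + ‖α2 - α1‖ := norm_sub_le_norm_sub_add_norm_sub _ _ _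
    _ < Rq (m + 2) z 1 / 3 + 2 / 3 * Rq (m + 2) z 1 := by rw [norm_sub_rev α2]; linarith
    _ = Rq (m + 2) z 1 := by ring
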